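/- The Riemann sum for the locking threshold converges to π/4 in the continuum limit: if s_j = -S + (j-1)·Δs with Δs = 2S/(N-1) and S = S_N → 1 with (1 - S_N)·N bounded (e.g., S_N = 1 - C/N for a constant C ∈ (0,2)), then (1/4)(1 - 1/N)·∑_{j=1}^N Δs/√(1 - s_j²) → π/4 as N → ∞. -/

import Mathlib

/-!
Write `d = Δs` and `f = arcsin' = (1 - s²)^(-1/2)`. As `f` is even and increasing on `[0, 1)`,
on a grid cell `[x, x + d]` inside `[-1, 0]` or `[0, 1]` the increment of `arcsin` lies between
`d` times the values of `f` at the two ends, and on the one cell straddling `0` it is at most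
`d (f x + f (x + d))`. Telescoping over the cells gives
  `2 arcsin S ≤ ∑ⱼ d f(sⱼ) ≤ 2 arcsin S + 2 d f(S)`,
and for `S = 1 - C/N` the error term is `O(N^(-1/2))` since `1 - S² ≥ C/N`, while
`arcsin S → π/2`.
-/

open Real Set Filter Topology Finset

lemma one_div_sqrt_one_sub_sq_le {x y : ℝ} (hxy : x ^ 2 ≤ y ^ 2) (hy : y ^ 2 < 1) :
    1 / √(1 - x ^ 2) ≤ 1 / √(1 - y ^ 2) :=
  one_div_le_one_div_of_le (sqrt_pos.2 (by linarith)) (sqrt_le_sqrt (by linarith))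

lemma arcsin_sub_le_of_sq_le {x y w : ℝ} (hx : -1 < x) (hy : y < 1) (hxy : x ≤ y)
    (hw : w ^ 2 < 1) (h : ∀ z ∈ Icc x y, z ^ 2 ≤ w ^ 2) :
    arcsin y - arcsin x ≤ 1 / √(1 - w ^ 2) * (y - x) := by
  refine (convex_Icc x y).image_sub_le_mul_sub_of_deriv_le continuous_arcsin.continuousOn
    (fun z hz => ?_) (fun z hz => ?_) x (left_mem_Icc.2 hxy) y (right_mem_Icc.2 hxy) hxy
  all_goals rw [interior_Icc] at hz
  · exact (differentiableAt_arcsin.2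
      ⟨by linarith [hz.1], by linarith [hz.2]⟩).differentiableWithinAt
  · rw [deriv_arcsin]
    exact one_div_sqrt_one_sub_sq_le (h z (Ioo_subset_Icc_self hz)) hw

lemma mul_le_arcsin_sub_of_sq_le {x y w : ℝ} (hx : -1 < x) (hy : y < 1) (hxy : x ≤ y)
    (h : ∀ z ∈ Icc x y, w ^ 2 ≤ z ^ 2) :
    1 / √(1 - w ^ 2) * (y - x) ≤ arcsin y - arcsin x := by
  refine (convex_Icc x y).mul_sub_le_image_sub_of_le_deriv continuous_arcsin.continuousOn
    (fun z hz => ?_) (fun z hz => ?_) x (left_mem_Icc.2 hxy) y (right_mem_Icc.2 hxy) hxy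
  all_goals rw [interior_Icc] at hz
  · exact (differentiableAt_arcsin.2
      ⟨by linarith [hz.1], by linarith [hz.2]⟩).differentiableWithinAt
  · rw [deriv_arcsin]
    exact one_div_sqrt_one_sub_sq_le (h z (Ioo_subset_Icc_self hz))
      (by nlinarith [hz.1, hz.2])

section CellSums

variable {node cell : ℕ → ℝ} {m n : ℕ}

lemma sum_cells_le_sum_nodes (hmn : m < n) (hl : ∀ i < m, cell i ≤ node i)
    (hm : cell m ≤ node m + node (m + 1))
    (hr : ∀ i, m < i → i < n → cell i ≤ node (i + 1)) :
    ∑ i ∈ range n, cell i ≤ ∑ i ∈ range (n + 1), node i := by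
  induction n, hmn using Nat.le_induction with
  | base =>
    rw [sum_range_succ, sum_range_succ, sum_range_succ]
    linarith [sum_le_sum fun i hi => hl i (mem_range.1 hi)]
  | succ n hmn ih =>
    rw [sum_range_succ cell n, sum_range_succ node (n + 1)]
    linarith [ih fun i hmi hin => hr i hmi (by omega), hr n hmn (by omega)]

lemma sum_nodes_le_sum_cells_add (hmn : m < n) (hl : ∀ i < m, node (i + 1) ≤ cell i)
    (hm : 0 ≤ cell m) (hr : ∀ i, m < i → i < n → node i ≤ cell i) :
    ∑ i ∈ range (n + 1), node i ≤ ∑ i ∈ range n, cell i + node 0 + node n := by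
  induction n, hmn using Nat.le_induction with
  | base =>
    rw [sum_range_succ, sum_range_succ', sum_range_succ]
    linarith [sum_le_sum fun i hi => hl i (mem_range.1 hi)]
  | succ n hmn ih =>
    rw [sum_range_succ cell n, sum_range_succ node (n + 1)]
    linarith [ih fun i hmi hin => hr i hmi (by omega), hr n hmn (by omega)]

end CellSums

section Cells

variable {x d : ℝ}

lemma arcsin_cell_bounds_of_nonpos (hx : -1 < x) (hd : 0 ≤ d) (hy : x + d ≤ 0) :
    d * (1 / √(1 - (x + d) ^ 2)) ≤ arcsin (x + d) - arcsin x ∧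
      arcsin (x + d) - arcsin x ≤ d * (1 / √(1 - x ^ 2)) := by
  constructor
  · have := mul_le_arcsin_sub_of_sq_le (x := x) (y := x + d) (w := x + d) hx (by linarith)
      (by linarith) fun z hz => by nlinarith [hz.1, hz.2]
    simpa [mul_comm] using this
  · have := arcsin_sub_le_of_sq_le (x := x) (y := x + d) (w := x) hx (by linarith)
      (by linarith) (by nlinarith) fun z hz => by nlinarith [hz.1, hz.2]
    simpa [mul_comm] using this

lemma arcsin_cell_bounds_of_nonneg (hx : 0 ≤ x) (hd : 0 ≤ d) (hy : x + d < 1) :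
    d * (1 / √(1 - x ^ 2)) ≤ arcsin (x + d) - arcsin x ∧
      arcsin (x + d) - arcsin x ≤ d * (1 / √(1 - (x + d) ^ 2)) := by
  constructor
  · have := mul_le_arcsin_sub_of_sq_le (x := x) (y := x + d) (w := x) (by linarith) hy
      (by linarith) fun z hz => by nlinarith [hz.1, hz.2]
    simpa [mul_comm] using this
  · have := arcsin_sub_le_of_sq_le (x := x) (y := x + d) (w := x + d) (by linarith) hy
      (by linarith) (by nlinarith) fun z hz => by nlinarith [hz.1, hz.2]
    simpa [mul_comm] using this

lemma arcsin_cell_le_of_straddle (hx : -1 < x) (hy : x + d < 1) (hx0 : x ≤ 0)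
    (hy0 : 0 ≤ x + d) :
    arcsin (x + d) - arcsin x ≤ d * (1 / √(1 - x ^ 2)) + d * (1 / √(1 - (x + d) ^ 2)) := by
  have hleft := (arcsin_cell_bounds_of_nonpos hx (by linarith : 0 ≤ -x) (by linarith)).2
  have hright := (arcsin_cell_bounds_of_nonneg le_rfl hy0 (by linarith)).2
  simp only [add_neg_cancel, zero_add] at hleft hright
  have := one_div_nonneg.2 (sqrt_nonneg (1 - x ^ 2))
  have := one_div_nonneg.2 (sqrt_nonneg (1 - (x + d) ^ 2))
  nlinarith

end Cells

section Grid

variable {d : ℝ} {m n : ℕ}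

lemma grid_succ (a : ℝ) (i : ℕ) : a + ((i + 1 : ℕ) : ℝ) * d = a + i * d + d := by
  push_cast; ring

lemma grid_le_grid (a : ℝ) (hd : 0 ≤ d) {i j : ℕ} (hij : i ≤ j) :
    a + i * d ≤ a + j * d := by
  gcongr

lemma neg_one_lt_grid {a : ℝ} (ha : -1 < a) (hd : 0 ≤ d) (i : ℕ) : -1 < a + i * d :=
  ha.trans_le (by simpa using grid_le_grid a hd (Nat.zero_le i))

lemma arcsin_sub_le_sum_grid {a : ℝ} (ha : -1 < a) (hb : a + n * d < 1) (hd : 0 ≤ d)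
    (hmn : m < n) (hneg : a + m * d ≤ 0) (hpos : 0 ≤ a + m * d + d) :
    arcsin (a + n * d) - arcsin a ≤
      ∑ i ∈ range (n + 1), d * (1 / √(1 - (a + i * d) ^ 2)) := by
  have htel := sum_range_sub (fun i : ℕ => arcsin (a + i * d)) n
  simp only [Nat.cast_zero, zero_mul, add_zero] at htel
  rw [← htel]
  refine sum_cells_le_sum_nodes hmn (fun i hi => ?_) ?_ (fun i hmi hin => ?_) <;>
    simp only [grid_succ]
  · have := grid_le_grid a hd hi
    rw [grid_succ] at this
    exact (arcsin_cell_bounds_of_nonpos (neg_one_lt_grid ha hd i) hd (this.trans hneg)).2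
  · have := (grid_le_grid a hd hmn).trans_lt hb
    rw [grid_succ] at this
    exact arcsin_cell_le_of_straddle (neg_one_lt_grid ha hd m) this hneg hpos
  · have h1 := grid_le_grid a hd hmi
    have h2 := (grid_le_grid a hd hin).trans_lt hb
    rw [grid_succ] at h1 h2
    exact (arcsin_cell_bounds_of_nonneg (hpos.trans h1) hd h2).2

lemma sum_grid_le_arcsin_sub_add {a : ℝ} (ha : -1 < a) (hb : a + n * d < 1) (hd : 0 ≤ d)
    (hmn : m < n) (hneg : a + m * d ≤ 0) (hpos : 0 ≤ a + m * d + d) :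
    ∑ i ∈ range (n + 1), d * (1 / √(1 - (a + i * d) ^ 2)) ≤
      arcsin (a + n * d) - arcsin a +
        d * (1 / √(1 - a ^ 2)) + d * (1 / √(1 - (a + n * d) ^ 2)) := by
  have htel := sum_range_sub (fun i : ℕ => arcsin (a + i * d)) n
  simp only [Nat.cast_zero, zero_mul, add_zero] at htel
  calc _ ≤ _ := sum_nodes_le_sum_cells_add
        (node := fun i : ℕ => d * (1 / √(1 - (a + i * d) ^ 2)))
        (cell := fun i : ℕ => arcsin (a + ((i + 1 : ℕ) : ℝ) * d) - arcsin (a + i * d))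
        hmn (fun i hi => ?_) ?_ (fun i hmi hin => ?_)
    _ = _ := by rw [htel]; simp
  all_goals simp only [grid_succ]
  · have := grid_le_grid a hd hi
    rw [grid_succ] at this
    exact (arcsin_cell_bounds_of_nonpos (neg_one_lt_grid ha hd i) hd (this.trans hneg)).1
  · exact sub_nonneg.2 (monotone_arcsin (by linarith))
  · have h1 := grid_le_grid a hd hmi
    have h2 := (grid_le_grid a hd hin).trans_lt hb
    rw [grid_succ] at h1 h2
    exact (arcsin_cell_bounds_of_nonneg (hpos.trans h1) hd h2).1

end Grid

noncomputable def arcsinRiemannSum (S : ℝ) (N : ℕ) : ℝ :=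
  ∑ i ∈ range N, 2 * S / (N - 1) * (1 / √(1 - (-S + i * (2 * S / (N - 1))) ^ 2))

lemma arcsinRiemannSum_mem_Icc {S : ℝ} {N : ℕ} (hS0 : 0 ≤ S) (hS1 : S < 1) (hN : 2 ≤ N) :
    arcsinRiemannSum S N ∈
      Icc (2 * arcsin S) (2 * arcsin S + 2 * (2 * S / (N - 1) * (1 / √(1 - S ^ 2)))) := by
  obtain ⟨n, rfl⟩ : ∃ n, N = n + 1 := ⟨N - 1, by omega⟩
  have hn : (0 : ℝ) < n := by exact_mod_cast (by omega : 0 < n)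
  have hcast : ((n + 1 : ℕ) : ℝ) - 1 = n := by push_cast; ring
  unfold arcsinRiemannSum
  rw [hcast]
  set d := 2 * S / n with hd
  have hd0 : 0 ≤ d := by positivity
  have hnd : n * d = 2 * S := by rw [hd]; field_simp
  set m := n / 2
  have hm : (2 * m : ℝ) ≤ n := by exact_mod_cast Nat.mul_div_le n 2
  have hm' : (n : ℝ) ≤ 2 * (m + 1) := by exact_mod_cast (by omega : n ≤ 2 * (m + 1))
  have hneg : -S + m * d ≤ 0 := by nlinarith [mul_le_mul_of_nonneg_right hm hd0]
  have hpos : 0 ≤ -S + m * d + d := by nlinarith [mul_le_mul_of_nonneg_right hm' hd0]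
  have hend : -S + n * d = S := by linarith
  have hmn : m < n := by omega
  have hlo := arcsin_sub_le_sum_grid (by linarith) (by linarith) hd0 hmn hneg hpos
  have hhi := sum_grid_le_arcsin_sub_add (by linarith) (by linarith) hd0 hmn hneg hpos
  rw [hend, arcsin_neg] at hlo hhi
  rw [neg_sq] at hhi
  constructor <;> linarith

lemma tendsto_mesh_mul_inv_sqrt_one_sub_sq {C : ℝ} (hC : 0 < C) :
    Tendsto (fun N : ℕ => 2 * (1 - C / N) / (N - 1) * (1 / √(1 - (1 - C / N) ^ 2)))
      atTop (𝓝 0) := by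
  have hlim : Tendsto (fun N : ℕ => 4 / √(C * N)) atTop (𝓝 0) :=
    tendsto_const_nhds.div_atTop
      (tendsto_sqrt_atTop.comp (tendsto_natCast_atTop_atTop.const_mul_atTop hC))
  refine tendsto_of_tendsto_of_tendsto_of_le_of_le' tendsto_const_nhds hlim ?_ ?_
  all_goals filter_upwards [eventually_ge_atTop 2,
    tendsto_natCast_atTop_atTop.eventually_ge_atTop C] with N hN2 hNC
  all_goals
    have hN : (2 : ℝ) ≤ N := by exact_mod_cast hN2
    have hCN : C / N ≤ 1 := (div_le_one (by linarith)).2 hNC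
  · have : 0 ≤ 2 * (1 - C / N) / (N - 1) := div_nonneg (by linarith) (by linarith)
    positivity
  · set S := 1 - C / N
    have hS : 0 ≤ S := by linarith
    have hS1 : S ≤ 1 := by linarith [div_pos hC (by linarith : (0 : ℝ) < N)]
    have hmesh : 2 * S / (N - 1) ≤ 4 / N := by
      rw [div_le_div_iff₀ (by linarith) (by linarith)]; nlinarith
    have hgap : √(C / N) ≤ √(1 - S ^ 2) := sqrt_le_sqrt (by nlinarith)
    have hsq : N * √(C / N) = √(C * N) := by
      have : C * N = N ^ 2 * (C / N) := by field_simp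
      rw [this, sqrt_mul (sq_nonneg _), sqrt_sq (by linarith)]
    calc 2 * S / (N - 1) * (1 / √(1 - S ^ 2)) ≤ 4 / N * (1 / √(C / N)) := by
          gcongr
      _ = 4 / √(C * N) := by rw [← hsq]; field_simp

lemma tendsto_arcsinRiemannSum {C : ℝ} (hC : 0 < C) :
    Tendsto (fun N : ℕ => arcsinRiemannSum (1 - C / N) N) atTop (𝓝 π) := by
  have harc : Tendsto (fun N : ℕ => 2 * arcsin (1 - C / N)) atTop (𝓝 π) := by
    have hS : Tendsto (fun N : ℕ => 1 - C / N) atTop (𝓝 1) := by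
      simpa using tendsto_const_nhds.sub (tendsto_const_div_atTop_nhds_zero_nat C)
    have := ((continuous_arcsin.tendsto 1).comp hS).const_mul 2
    rwa [arcsin_one, mul_div_cancel₀ _ two_ne_zero] at this
  have herr := harc.add ((tendsto_mesh_mul_inv_sqrt_one_sub_sq hC).const_mul 2)
  rw [mul_zero, add_zero] at herr
  have hmem : ∀ᶠ N : ℕ in atTop, arcsinRiemannSum (1 - C / N) N ∈
      Icc (2 * arcsin (1 - C / N)) (2 * arcsin (1 - C / N) +
        2 * (2 * (1 - C / N) / (N - 1) * (1 / √(1 - (1 - C / N) ^ 2)))) := by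
    filter_upwards [eventually_ge_atTop 2,
      tendsto_natCast_atTop_atTop.eventually_ge_atTop C] with N hN hNC
    have hCN : 0 < C / N := div_pos hC (by positivity)
    have hCN' : C / N ≤ 1 := (div_le_one (by positivity)).2 hNC
    exact arcsinRiemannSum_mem_Icc (by linarith) (by linarith) hN
  exact tendsto_of_tendsto_of_tendsto_of_le_of_le' harc herr
    (hmem.mono fun _ h => h.1) (hmem.mono fun _ h => h.2)

theorem stmt_7 (C : ℝ) (hC : C ∈ Set.Ioo (0 : ℝ) 2) :
    Filter.Tendsto
      (fun N : ℕ =>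
        (1 / 4) * (1 - 1 / (N : ℝ)) *
          ∑ j ∈ Finset.Icc 1 N,
            (2 * (1 - C / (N : ℝ)) / ((N : ℝ) - 1)) /
              Real.sqrt (1 - (-(1 - C / (N : ℝ)) +
                ((j : ℝ) - 1) * (2 * (1 - C / (N : ℝ)) / ((N : ℝ) - 1))) ^ 2))
      Filter.atTop (nhds (Real.pi / 4)) := by
  have hsum (N : ℕ) : ∑ j ∈ Icc 1 N, 2 * (1 - C / N) / (N - 1) /
      √(1 - (-(1 - C / N) + ((j : ℝ) - 1) * (2 * (1 - C / N) / (N - 1))) ^ 2) =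
      arcsinRiemannSum (1 - C / N) N := by
    rw [arcsinRiemannSum, ← Finset.Ico_add_one_right_eq_Icc, sum_Ico_eq_sum_range,
      Nat.add_sub_cancel]
    refine sum_congr rfl fun j _ => ?_
    push_cast
    rw [add_sub_cancel_left, mul_one_div]
  simp only [hsum]
  have hfac : Tendsto (fun N : ℕ => 1 / 4 * (1 - 1 / (N : ℝ))) atTop (𝓝 (1 / 4)) := by
    simpa using ((tendsto_const_nhds (x := (1 : ℝ))).sub
      tendsto_one_div_atTop_nhds_zero_nat).const_mul 4⁻¹
  convert hfac.mul (tendsto_arcsinRiemannSum hC.1) using 2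
  ring
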